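/- arXiv:2211.03870 — 4 statements merged into one kernel-verified Lean document; each statement's English description precedes it below -/
import Mathlib

section
/- An n×n integer matrix A belongs to the group generated by the elementary involutions if and only if |det A| = 1 and A is congruent to the identity matrix modulo 2 (all off-diagonal entries even, all diagonal entries odd). -/
/-- The elementary involution `A_{ij}`: the `n × n` integer matrix equal to the identity
except that its `(i,i)` entry is `-1` and, if `j = some j'` (i.e. `1 ≤ j ≤ n`), its `(j',i)`
entry is `2`. `j = none` encodes jumping over the stationary piece `0`. -/
def elemInv (n : ℕ) (i : Fin n) (j : Option (Fin n)) : Matrix (Fin n) (Fin n) ℤ :=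
  1 + Matrix.single i i (-2) +
    Option.elim j 0 (fun j' => Matrix.single j' i 2)


namespace ElemInvAux

open Matrix Finset

variable {n : ℕ}

def S (n : ℕ) : Set (Matrix (Fin n) (Fin n) ℤ) :=
  {M | ∃ (i : Fin n) (j : Option (Fin n)), j ≠ some i ∧ M = elemInv n i j}

abbrev G (n : ℕ) : Submonoid (Matrix (Fin n) (Fin n) ℤ) := Submonoid.closure (S n)

lemma addStd_mul (i j : Fin n) (c : ℤ) (M : Matrix (Fin n) (Fin n) ℤ) (k l : Fin n) :
    ((1 + Matrix.single i j c) * M) k l = M k l + if k = i then c * M j l else 0 := by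
  rw [add_mul, one_mul, Matrix.add_apply]
  rcases eq_or_ne k i with rfl | h
  · simp
  · simp [h]

lemma mul_addStd (i j : Fin n) (c : ℤ) (M : Matrix (Fin n) (Fin n) ℤ) (k l : Fin n) :
    (M * (1 + Matrix.single i j c)) k l = M k l + if l = j then M k i * c else 0 := by
  rw [mul_add, mul_one, Matrix.add_apply]
  rcases eq_or_ne l j with rfl | h
  · simp
  · simp [h]

lemma addStd_mul_addStd {i j : Fin n} (h : i ≠ j) (c d : ℤ) :
    (1 + Matrix.single i j c) * (1 + Matrix.single i j d) =
      1 + Matrix.single i j (c + d) := by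
  have h0 : Matrix.single i j c * Matrix.single i j d = 0 := by simp [h.symm]
  simp only [mul_add, add_mul, mul_one, one_mul, h0, add_zero, Matrix.single_add]
  abel

lemma D_mul_D (i : Fin n) :
    (1 + Matrix.single i i (-2:ℤ)) * (1 + Matrix.single i i (-2:ℤ)) = 1 := by
  have h0 : Matrix.single i i (-2:ℤ) * Matrix.single i i (-2:ℤ) =
      Matrix.single i i (4:ℤ) := by
    rw [Matrix.single_mul_single_same]; norm_num
  simp only [mul_add, add_mul, mul_one, one_mul, h0]
  have : Matrix.single i i (-2:ℤ) + (Matrix.single i i (-2:ℤ) + Matrix.single i i (4:ℤ))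
      = 0 := by
    rw [← Matrix.single_add, ← Matrix.single_add]
    norm_num
  rw [add_assoc, this, add_zero]

lemma D_mem (i : Fin n) : (1 + Matrix.single i i (-2:ℤ)) ∈ G n := by
  apply Submonoid.subset_closure
  exact ⟨i, none, by simp, by simp [elemInv]⟩

lemma elemInv_some_eq (i j : Fin n) (h : j ≠ i) :
    elemInv n i (some j) = (1 + Matrix.single i i (-2:ℤ)) * (1 + Matrix.single j i 2) := by
  have hij : i ≠ j := fun hh => h hh.symm
  have h0 : Matrix.single i i (-2:ℤ) * Matrix.single j i 2 = 0 := by simp [hij]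
  simp only [mul_add, add_mul, mul_one, one_mul, h0, add_zero]
  show 1 + Matrix.single i i (-2:ℤ) + Matrix.single j i 2 = _
  abel

lemma T2_mem {p q : Fin n} (h : p ≠ q) : (1 + Matrix.single p q (2:ℤ)) ∈ G n := by
  have hmem : elemInv n q (some p) ∈ G n :=
    Submonoid.subset_closure ⟨q, some p, by simpa using h, rfl⟩
  have key : (1 + Matrix.single q q (-2:ℤ)) * elemInv n q (some p)
      = 1 + Matrix.single p q 2 := by
    rw [elemInv_some_eq q p h, ← mul_assoc, D_mul_D, one_mul]
  exact key ▸ Submonoid.mul_mem _ (D_mem q) hmem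

lemma Tneg2_mem {p q : Fin n} (h : p ≠ q) : (1 + Matrix.single p q (-2:ℤ)) ∈ G n := by
  have key : (1 + Matrix.single p p (-2:ℤ)) * (1 + Matrix.single p q (2:ℤ)) *
      (1 + Matrix.single p p (-2:ℤ)) = 1 + Matrix.single p q (-2:ℤ) := by
    have h1 : Matrix.single p p (-2:ℤ) * Matrix.single p q 2 = Matrix.single p q (-4:ℤ) := by
      rw [Matrix.single_mul_single_same]; norm_num
    have h2 : Matrix.single p q (2:ℤ) * Matrix.single p p (-2:ℤ) = 0 := by simp [h.symm]
    have h3 : Matrix.single p q (-4:ℤ) * Matrix.single p p (-2:ℤ) = 0 := by simp [h.symm]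
    simp only [mul_add, add_mul, mul_one, one_mul, h1, h2, h3, add_zero]
    have h4 : Matrix.single p q (2:ℤ) + Matrix.single p q (-4:ℤ) =
        Matrix.single p q (-2:ℤ) := by
      rw [← Matrix.single_add]; norm_num
    have h5 : Matrix.single p p (-2:ℤ) + Matrix.single p p (-2:ℤ) +
        Matrix.single p p (4:ℤ) = 0 := by
      rw [← Matrix.single_add, ← Matrix.single_add]; norm_num
    have h6 : Matrix.single p p (-2:ℤ) * Matrix.single p p (-2:ℤ) =
        Matrix.single p p (4:ℤ) := by
      rw [Matrix.single_mul_single_same]; norm_num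
    rw [h6, h4]
    have h5' : Matrix.single p p (-2:ℤ) + (Matrix.single p p (-2:ℤ) +
        Matrix.single p p (4:ℤ)) = 0 := by rw [← add_assoc, h5]
    calc 1 + Matrix.single p p (-2:ℤ) + Matrix.single p q (-2:ℤ) +
          (Matrix.single p p (-2:ℤ) + Matrix.single p p (4:ℤ))
        = 1 + Matrix.single p q (-2:ℤ) + (Matrix.single p p (-2:ℤ) +
          (Matrix.single p p (-2:ℤ) + Matrix.single p p (4:ℤ))) := by abel
      _ = 1 + Matrix.single p q (-2:ℤ) := by rw [h5', add_zero]
  exact key ▸ Submonoid.mul_mem _ (Submonoid.mul_mem _ (D_mem p) (T2_mem h)) (D_mem p)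

lemma T_mem {p q : Fin n} (h : p ≠ q) (m : ℤ) : (1 + Matrix.single p q (2*m)) ∈ G n := by
  induction m using Int.induction_on with
  | zero => simpa using Submonoid.one_mem (G n)
  | succ k ih =>
    have e2 : 2*((k:ℤ)+1) = 2*(k:ℤ) + 2 := by ring
    rw [e2, ← addStd_mul_addStd h]
    exact Submonoid.mul_mem _ ih (T2_mem h)
  | pred k ih =>
    have e2 : 2*(-(k:ℤ)-1) = 2*(-(k:ℤ)) + (-2) := by ring
    rw [e2, ← addStd_mul_addStd h]
    exact Submonoid.mul_mem _ ih (Tneg2_mem h)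



/-! ### The predicate -/

lemma addStd_apply (i j : Fin n) (c : ℤ) (k l : Fin n) :
    (1 + Matrix.single i j c) k l = (if k = l then (1:ℤ) else 0) +
      (if i = k ∧ j = l then c else 0) := by
  simp [Matrix.one_apply, Matrix.single]

def Pred (A : Matrix (Fin n) (Fin n) ℤ) : Prop :=
  |A.det| = 1 ∧ A.map (Int.castRingHom (ZMod 2)) = 1

lemma Pred_one : Pred (1 : Matrix (Fin n) (Fin n) ℤ) := by
  constructor
  · simp
  · ext k l
    simp [Matrix.map_apply, Matrix.one_apply, apply_ite (Int.cast : ℤ → ZMod 2)]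

lemma Pred_mul {A B : Matrix (Fin n) (Fin n) ℤ} (hA : Pred A) (hB : Pred B) :
    Pred (A * B) := by
  constructor
  · rw [Matrix.det_mul, abs_mul, hA.1, hB.1, mul_one]
  · rw [Matrix.map_mul (f := Int.castRingHom (ZMod 2)), hA.2, hB.2, mul_one]

lemma castZMod2_eq_zero_iff (x : ℤ) : ((x : ZMod 2) = 0) ↔ Even x := by
  rw [ZMod.intCast_zmod_eq_zero_iff_dvd]
  constructor
  · rintro ⟨c, rfl⟩; exact ⟨c, by push_cast; ring⟩
  · rintro ⟨c, rfl⟩; exact ⟨c, by push_cast; ring⟩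

lemma castZMod2_eq_one_iff (x : ℤ) : ((x : ZMod 2) = 1) ↔ Odd x := by
  constructor
  · intro h
    rw [← Int.not_even_iff_odd]
    intro he
    rw [← castZMod2_eq_zero_iff] at he
    rw [he] at h
    exact absurd h (by decide)
  · rintro ⟨m, rfl⟩
    push_cast
    have h2 : (2 : ZMod 2) = 0 := by decide
    rw [h2]
    ring

lemma map2_addStd (i j : Fin n) {c : ℤ} (hc : Even c) :
    (1 + Matrix.single i j c).map (Int.castRingHom (ZMod 2)) = 1 := by
  have hc' : ((c : ZMod 2)) = 0 := (castZMod2_eq_zero_iff c).2 hc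
  ext k l
  rw [Matrix.map_apply, addStd_apply]
  rw [show ((Int.castRingHom (ZMod 2)) : ℤ → ZMod 2) = (Int.cast : ℤ → ZMod 2) from rfl]
  rw [Int.cast_add, apply_ite (Int.cast : ℤ → ZMod 2), apply_ite (Int.cast : ℤ → ZMod 2), hc']
  simp [Matrix.one_apply]

lemma det_D (i : Fin n) : (1 + Matrix.single i i (-2:ℤ)).det = -1 := by
  have hD : 1 + Matrix.single i i (-2:ℤ) =
      Matrix.diagonal (fun k => if k = i then -1 else 1) := by
    ext k l
    rw [addStd_apply, Matrix.diagonal_apply]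
    rcases eq_or_ne k l with rfl | h
    · rcases eq_or_ne k i with rfl | h2
      · simp
      · have h2' : ¬ i = k := fun hh => h2 hh.symm
        simp [h2, h2']
    · have h' : ¬ (i = k ∧ i = l) := fun hh => h (hh.1.symm.trans hh.2)
      simp [h, h']
  rw [hD, Matrix.det_diagonal]
  rw [Finset.prod_eq_single i (fun b _ hb => if_neg hb) (fun h => absurd (Finset.mem_univ i) h)]
  simp

lemma Pred_D (i : Fin n) : Pred (1 + Matrix.single i i (-2:ℤ)) := by
  refine ⟨?_, map2_addStd i i (by norm_num)⟩
  rw [det_D]; norm_num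

lemma Pred_T {p q : Fin n} (h : p ≠ q) {c : ℤ} (hc : Even c) :
    Pred (1 + Matrix.single p q c) := by
  refine ⟨?_, map2_addStd p q hc⟩
  have : (1 + Matrix.single p q c) = Matrix.transvection p q c := rfl
  rw [this, Matrix.det_transvection_of_ne p q h c]
  norm_num

lemma Pred_elemInv (i : Fin n) (j : Option (Fin n)) (hj : j ≠ some i) :
    Pred (elemInv n i j) := by
  cases j with
  | none =>
    have : elemInv n i none = 1 + Matrix.single i i (-2:ℤ) := by simp [elemInv]
    rw [this]; exact Pred_D i
  | some j' =>
    have hji : j' ≠ i := by simpa using hj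
    rw [elemInv_some_eq i j' hji]
    exact Pred_mul (Pred_D i) (Pred_T hji ⟨1, rfl⟩)

lemma pred_of_mem {A : Matrix (Fin n) (Fin n) ℤ} (hA : A ∈ G n) : Pred A :=
  Submonoid.closure_induction
    (fun _ hx => by obtain ⟨i, j, hj, rfl⟩ := hx; exact Pred_elemInv i j hj)
    Pred_one (fun _ _ _ _ px py => Pred_mul px py) hA

/-! ### Parity characterization -/

lemma parity_iff (A : Matrix (Fin n) (Fin n) ℤ) :
    A.map (Int.castRingHom (ZMod 2)) = 1 ↔
      ((∀ k l, k ≠ l → Even (A k l)) ∧ ∀ k, Odd (A k k)) := by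
  constructor
  · intro h
    refine ⟨fun k l hkl => ?_, fun k => ?_⟩
    · have h1 := congrFun (congrFun h k) l
      rw [Matrix.map_apply, Matrix.one_apply_ne hkl] at h1
      exact (castZMod2_eq_zero_iff _).1 h1
    · have h1 := congrFun (congrFun h k) k
      rw [Matrix.map_apply, Matrix.one_apply_eq] at h1
      exact (castZMod2_eq_one_iff _).1 h1
  · rintro ⟨h1, h2⟩
    ext k l
    rw [Matrix.map_apply]
    rcases eq_or_ne k l with rfl | h
    · rw [Matrix.one_apply_eq]
      exact (castZMod2_eq_one_iff _).2 (h2 k)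
    · rw [Matrix.one_apply_ne h]
      exact (castZMod2_eq_zero_iff _).2 (h1 k l h)

/-! ### The Euclidean step -/

lemma step_aux {a b : ℤ} (ha : a ≠ 0) (hpar : ¬ Even (a + b)) :
    ∃ k : ℤ, |b + 2 * k * a| < |a| := by
  set m : ℤ := 2 * |a| with hm_def
  have hm : 0 < m := by positivity
  set r : ℤ := b % m with hr_def
  have h0 : 0 ≤ r := Int.emod_nonneg b (by omega)
  have h1 : r < m := Int.emod_lt_of_pos b hm
  have hb : m * (b / m) + r = b := Int.mul_ediv_add_emod b m
  obtain ⟨s, hsa⟩ : ∃ s : ℤ, s * a = |a| := by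
    rcases le_or_gt 0 a with h | h
    · exact ⟨1, by rw [one_mul, abs_of_nonneg h]⟩
    · exact ⟨-1, by rw [neg_one_mul, abs_of_neg h]⟩
  have hpar' : ¬ Even (a + r) := by
    intro ⟨c, hc⟩
    exact hpar ⟨c + |a| * (b / m), by rw [hm_def] at hb; linarith⟩
  have hrne : r ≠ |a| := by
    intro hre
    rcases le_or_gt 0 a with h | h
    · rw [abs_of_nonneg h] at hre
      exact hpar' ⟨a, by omega⟩
    · rw [abs_of_neg h] at hre
      exact hpar' ⟨0, by omega⟩
  rcases lt_or_ge r |a| with hlt | hge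
  · refine ⟨-(b / m) * s, ?_⟩
    have : b + 2 * (-(b / m) * s) * a = r := by
      have : 2 * (-(b / m) * s) * a = -(b / m) * (2 * (s * a)) := by ring
      rw [this, hsa]
      rw [hm_def] at hb
      linarith
    rw [this, abs_of_nonneg h0]
    exact hlt
  · have hgt : |a| < r := lt_of_le_of_ne hge (Ne.symm hrne)
    refine ⟨-(b / m + 1) * s, ?_⟩
    have : b + 2 * (-(b / m + 1) * s) * a = r - m := by
      have : 2 * (-(b / m + 1) * s) * a = -(b / m + 1) * (2 * (s * a)) := by ring
      rw [this, hsa]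
      rw [hm_def] at hb ⊢
      linarith
    rw [this, abs_of_neg (by omega : r - m < 0)]
    rw [hm_def] at h1 ⊢
    omega

/-! ### Lifting from `Fin n` to `Fin (n+1)` -/

def lift (B : Matrix (Fin n) (Fin n) ℤ) : Matrix (Fin (n+1)) (Fin (n+1)) ℤ :=
  Matrix.of fun k l =>
    Fin.cases (Fin.cases 1 (fun _ => 0) l) (fun k' => Fin.cases 0 (fun l' => B k' l') l) k

@[simp] lemma lift_zero_zero (B : Matrix (Fin n) (Fin n) ℤ) : lift B 0 0 = 1 := rfl
@[simp] lemma lift_zero_succ (B : Matrix (Fin n) (Fin n) ℤ) (l : Fin n) :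
    lift B 0 l.succ = 0 := rfl
@[simp] lemma lift_succ_zero (B : Matrix (Fin n) (Fin n) ℤ) (k : Fin n) :
    lift B k.succ 0 = 0 := rfl
@[simp] lemma lift_succ_succ (B : Matrix (Fin n) (Fin n) ℤ) (k l : Fin n) :
    lift B k.succ l.succ = B k l := rfl

lemma lift_one : lift (1 : Matrix (Fin n) (Fin n) ℤ) = 1 := by
  ext k l
  induction k using Fin.cases with
  | zero =>
    induction l using Fin.cases with
    | zero => simp
    | succ l' => simp [Matrix.one_apply, (Fin.succ_ne_zero l').symm]
  | succ k' =>
    induction l using Fin.cases with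
    | zero => simp [Matrix.one_apply, Fin.succ_ne_zero k']
    | succ l' => simp [Matrix.one_apply, Fin.succ_inj]

lemma lift_mul (M N : Matrix (Fin n) (Fin n) ℤ) :
    lift (M * N) = lift M * lift N := by
  ext k l
  rw [Matrix.mul_apply, Fin.sum_univ_succ]
  induction k using Fin.cases with
  | zero =>
    induction l using Fin.cases with
    | zero => simp
    | succ l' => simp
  | succ k' =>
    induction l using Fin.cases with
    | zero => simp
    | succ l' => simp [Matrix.mul_apply]

lemma lift_elemInv (i : Fin n) (j : Option (Fin n)) :
    lift (elemInv n i j) = elemInv (n+1) i.succ (j.map Fin.succ) := by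
  ext k l
  induction k using Fin.cases with
  | zero =>
    induction l using Fin.cases with
    | zero =>
      cases j <;>
        simp [elemInv, Matrix.one_apply, Matrix.single,
          Fin.succ_ne_zero, (Fin.succ_ne_zero i).symm, (Fin.succ_ne_zero _).symm]
    | succ l' =>
      cases j <;>
        simp [elemInv, Matrix.one_apply, Matrix.single,
          Fin.succ_ne_zero, (Fin.succ_ne_zero l').symm, (Fin.succ_ne_zero _).symm]
  | succ k' =>
    induction l using Fin.cases with
    | zero =>
      cases j <;>
        simp [elemInv, Matrix.one_apply, Matrix.single, Fin.succ_ne_zero,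
          (Fin.succ_ne_zero i).symm, (Fin.succ_ne_zero _).symm]
    | succ l' =>
      cases j <;>
        simp [elemInv, Matrix.one_apply, Matrix.single, Fin.succ_inj]

lemma lift_mem {B : Matrix (Fin n) (Fin n) ℤ} (hB : B ∈ G n) : lift B ∈ G (n+1) := by
  refine Submonoid.closure_induction (motive := fun x _ => lift x ∈ G (n+1)) ?_ ?_ ?_ hB
  · rintro x ⟨i, j, hj, rfl⟩
    rw [lift_elemInv]
    apply Submonoid.subset_closure
    refine ⟨i.succ, j.map Fin.succ, ?_, rfl⟩
    cases j with
    | none => simp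
    | some j' =>
      simp only [Option.map_some, ne_eq, Option.some.injEq]
      intro hh
      exact hj (by simpa [Fin.succ_inj] using hh)
  · show lift (1 : Matrix (Fin n) (Fin n) ℤ) ∈ G (n+1)
    rw [lift_one]; exact Submonoid.one_mem _
  · intro x y _ _ hx hy
    rw [lift_mul]
    exact Submonoid.mul_mem _ hx hy

/-! ### The terminal case -/

lemma prodV_mem (c : Fin (n+1) → ℤ) (s : Finset (Fin (n+1))) :
    (0 : Fin (n+1)) ∉ s → (∀ l ∈ s, Even (c l)) →
      (1 + ∑ l ∈ s, Matrix.single (0 : Fin (n+1)) l (c l)) ∈ G (n+1) := by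
  induction s using Finset.induction_on with
  | empty => intro _ _; simpa using Submonoid.one_mem (G (n+1))
  | @insert a s ha ih =>
    intro h0 hev
    have ha0 : a ≠ 0 := fun h => h0 (h ▸ Finset.mem_insert_self a s)
    have h0s : (0 : Fin (n+1)) ∉ s := fun h => h0 (Finset.mem_insert_of_mem h)
    rw [Finset.sum_insert ha]
    have hz : Matrix.single (0:Fin (n+1)) a (c a) *
        (∑ l ∈ s, Matrix.single (0:Fin (n+1)) l (c l)) = 0 := by
      rw [Finset.mul_sum]
      exact Finset.sum_eq_zero fun l _ => by simp [ha0]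
    have key : (1 : Matrix (Fin (n+1)) (Fin (n+1)) ℤ) +
        (Matrix.single (0:Fin (n+1)) a (c a) +
          ∑ l ∈ s, Matrix.single (0:Fin (n+1)) l (c l)) =
        (1 + Matrix.single (0:Fin (n+1)) a (c a)) *
          (1 + ∑ l ∈ s, Matrix.single (0:Fin (n+1)) l (c l)) := by
      simp only [mul_add, add_mul, mul_one, one_mul, hz, add_zero]
      abel
    rw [key]
    obtain ⟨m, hm⟩ := hev a (Finset.mem_insert_self a s)
    have hca : c a = 2 * m := by omega
    rw [hca]
    exact Submonoid.mul_mem _ (T_mem (Ne.symm ha0) m)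
      (ih h0s fun l hl => hev l (Finset.mem_insert_of_mem hl))

lemma mul_V_apply (c : Fin (n+1) → ℤ) (M : Matrix (Fin (n+1)) (Fin (n+1)) ℤ)
    (k m : Fin (n+1)) :
    (M * (1 + ∑ l ∈ Finset.univ.erase 0, Matrix.single (0:Fin (n+1)) l (c l))) k m =
      M k m + if m = 0 then 0 else M k 0 * c m := by
  rw [mul_add, mul_one, Matrix.add_apply, Matrix.mul_sum, Matrix.sum_apply]
  congr 1
  have step : ∀ l ∈ Finset.univ.erase (0 : Fin (n+1)),
      (M * Matrix.single (0:Fin (n+1)) l (c l)) k m = if m = l then M k 0 * c l else 0 := by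
    intro l _
    rcases eq_or_ne m l with rfl | h
    · simp
    · simp [h]
  rw [Finset.sum_congr rfl step, Finset.sum_ite_eq]
  rcases eq_or_ne m 0 with rfl | h
  · simp
  · simp [Finset.mem_erase, h]

lemma terminal (IH : ∀ B : Matrix (Fin n) (Fin n) ℤ, Pred B → B ∈ G n)
    (A : Matrix (Fin (n+1)) (Fin (n+1)) ℤ) (hA : Pred A)
    (hcol : ∀ j : Fin (n+1), j ≠ 0 → A j 0 = 0) : A ∈ G (n+1) := by
  have hdet : A.det = A 0 0 * (A.submatrix Fin.succ Fin.succ).det := by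
    rw [Matrix.det_succ_column_zero, Finset.sum_eq_single 0]
    · simp
    · intro b _ hb; rw [hcol b hb]; ring
    · intro hmem; exact absurd (Finset.mem_univ _) hmem
  have habs : |A 0 0| = 1 := by
    have h1 := hA.1
    rw [hdet, abs_mul] at h1
    rcases Int.isUnit_iff.1 (IsUnit.of_mul_eq_one _ h1) with h | h
    · exact h
    · have := abs_nonneg (A 0 0); omega
  have hdetB : |(A.submatrix Fin.succ Fin.succ).det| = 1 := by
    have h1 := hA.1
    rw [hdet, abs_mul, habs, one_mul] at h1
    exact h1
  have hpar := (parity_iff A).1 hA.2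
  have hB : Pred (A.submatrix Fin.succ Fin.succ) := by
    refine ⟨hdetB, (parity_iff _).2 ⟨fun k l hkl => ?_, fun k => hpar.2 k.succ⟩⟩
    exact hpar.1 k.succ l.succ (by simp [Fin.succ_inj, hkl])
  have hBmem := lift_mem (IH _ hB)
  have ha2 : A 0 0 * A 0 0 = 1 := by
    rcases (abs_eq (by norm_num : (0:ℤ) ≤ 1)).1 habs with h | h <;> rw [h] <;> ring
  -- the column-operations matrix
  have hV : (1 + ∑ l ∈ Finset.univ.erase 0,
      Matrix.single (0:Fin (n+1)) l (A 0 0 * A 0 l)) ∈ G (n+1) := by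
    apply prodV_mem _ _ (by simp)
    intro l hl
    exact ((hpar.1 0 l (Ne.symm (Finset.mem_erase.1 hl).1)).mul_left _)
  have hW : (1 + Matrix.single (0:Fin (n+1)) 0 (A 0 0 - 1)) ∈ G (n+1) := by
    rcases (abs_eq (by norm_num : (0:ℤ) ≤ 1)).1 habs with h | h
    · rw [h]
      norm_num
    · rw [h]
      show (1 + Matrix.single (0:Fin (n+1)) 0 (-1-1)) ∈ G (n+1)
      rw [show (-1-1 : ℤ) = -2 by norm_num]
      exact D_mem 0
  have key : A = (1 + Matrix.single (0:Fin (n+1)) 0 (A 0 0 - 1)) *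
      (lift (A.submatrix Fin.succ Fin.succ) *
        (1 + ∑ l ∈ Finset.univ.erase 0,
          Matrix.single (0:Fin (n+1)) l (A 0 0 * A 0 l))) := by
    ext k m
    rw [addStd_mul, mul_V_apply, mul_V_apply]
    induction k using Fin.cases with
    | zero =>
      induction m using Fin.cases with
      | zero => simp
      | succ m' =>
        simp only [lift_zero_succ, lift_zero_zero, Fin.succ_ne_zero, if_neg, if_pos,
          ite_false, ite_true, one_mul, zero_add]
        have : A 0 0 * A 0 m'.succ + (A 0 0 - 1) * (A 0 0 * A 0 m'.succ) =
            (A 0 0 * A 0 0) * A 0 m'.succ := by ring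
        rw [this, ha2, one_mul]
    | succ k' =>
      induction m using Fin.cases with
      | zero =>
        simp [Fin.succ_ne_zero, hcol k'.succ (Fin.succ_ne_zero k')]
      | succ m' =>
        simp [Fin.succ_ne_zero]
  rw [key]
  exact Submonoid.mul_mem _ hW (Submonoid.mul_mem _ hBmem hV)

/-! ### The main induction -/

lemma main_succ (IH : ∀ B : Matrix (Fin n) (Fin n) ℤ, Pred B → B ∈ G n) :
    ∀ (N : ℕ) (A : Matrix (Fin (n+1)) (Fin (n+1)) ℤ),
      (∑ j, (A j 0).natAbs) ≤ N → Pred A → A ∈ G (n+1) := by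
  intro N
  induction N with
  | zero =>
    intro A hμ hA
    exfalso
    have hodd := ((parity_iff A).1 hA.2).2 0
    have h1 : A 0 0 ≠ 0 := by
      rintro h
      rw [h] at hodd
      simpa using hodd
    have h2 : (A 0 0).natAbs ≤ ∑ j, (A j 0).natAbs :=
      Finset.single_le_sum (f := fun j : Fin (n+1) => (A j 0).natAbs)
        (fun i _ => Nat.zero_le _) (Finset.mem_univ 0)
    have h3 : (A 0 0).natAbs ≠ 0 := Int.natAbs_ne_zero.2 h1
    omega
  | succ N ih =>
    intro A hμ hA
    by_cases hcol : ∀ j : Fin (n+1), j ≠ 0 → A j 0 = 0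
    · exact terminal IH A hA hcol
    push_neg at hcol
    obtain ⟨j, hj0, hjne⟩ := hcol
    have hpar := (parity_iff A).1 hA.2
    have hodd : Odd (A 0 0) := hpar.2 0
    have heven : Even (A j 0) := hpar.1 j 0 hj0
    have ha0 : A 0 0 ≠ 0 := by
      rintro h
      rw [h] at hodd
      simpa using hodd
    rcases le_or_gt |A 0 0| |A j 0| with hba | hba
    · -- reduce the entry at (j, 0)
      have hpar2 : ¬ Even (A 0 0 + A j 0) := by
        obtain ⟨u, hu⟩ := hodd
        obtain ⟨v, hv⟩ := heven
        rintro ⟨w, hw⟩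
        omega
      obtain ⟨k, hk⟩ := step_aux ha0 hpar2
      have hent : ∀ p q : Fin (n+1), (((1:Matrix (Fin (n+1)) (Fin (n+1)) ℤ) + Matrix.single j (0:Fin (n+1)) (2*k)) * A) p q =
          A p q + if p = j then 2*k * A 0 q else 0 := addStd_mul j 0 (2*k) A
      have hA' : Pred (((1:Matrix (Fin (n+1)) (Fin (n+1)) ℤ) + Matrix.single j (0:Fin (n+1)) (2*k)) * A) :=
        Pred_mul (Pred_T hj0 ⟨k, by ring⟩) hA
      have hlt : (A j 0 + 2*k*A 0 0).natAbs < (A j 0).natAbs := by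
        have h5 : |A j 0 + 2*k*A 0 0| < |A j 0| := lt_of_lt_of_le hk hba
        rw [Int.abs_eq_natAbs, Int.abs_eq_natAbs] at h5
        exact_mod_cast h5
      have hstrict : ((((1:Matrix (Fin (n+1)) (Fin (n+1)) ℤ) + Matrix.single j (0:Fin (n+1)) (2*k)) * A) j 0).natAbs < (A j 0).natAbs := by
        rw [hent j 0, if_pos rfl]
        exact hlt
      have hsum : (∑ i, ((((1:Matrix (Fin (n+1)) (Fin (n+1)) ℤ) + Matrix.single j (0:Fin (n+1)) (2*k)) * A) i 0).natAbs) <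
          ∑ i, ((A i 0).natAbs) := by
        apply Finset.sum_lt_sum
        · intro i _
          rw [hent i 0]
          rcases eq_or_ne i j with rfl | h
          · rw [if_pos rfl]
            exact le_of_lt hlt
          · rw [if_neg h, add_zero]
        · exact ⟨j, Finset.mem_univ j, hstrict⟩
      have hGA : ((1:Matrix (Fin (n+1)) (Fin (n+1)) ℤ) + Matrix.single j (0:Fin (n+1)) (2*k)) * A ∈ G (n+1) :=
        ih _ (by omega) hA'
      have hback : A = (1 + Matrix.single j (0:Fin (n+1)) (2*(-k))) *
          ((1 + Matrix.single j (0:Fin (n+1)) (2*k)) * A) := by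
        rw [← mul_assoc, addStd_mul_addStd hj0,
          show 2*(-k) + 2*k = (0:ℤ) by ring, Matrix.single_zero, add_zero, one_mul]
      rw [hback]
      exact Submonoid.mul_mem _ (T_mem hj0 (-k)) hGA
    · -- reduce the entry at (0, 0)
      have hpar2 : ¬ Even (A j 0 + A 0 0) := by
        obtain ⟨u, hu⟩ := hodd
        obtain ⟨v, hv⟩ := heven
        rintro ⟨w, hw⟩
        omega
      obtain ⟨k, hk⟩ := step_aux hjne hpar2
      have h0j : (0 : Fin (n+1)) ≠ j := Ne.symm hj0
      have hent : ∀ p q : Fin (n+1), ((1 + Matrix.single (0:Fin (n+1)) j (2*k)) * A) p q =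
          A p q + if p = 0 then 2*k * A j q else 0 := addStd_mul 0 j (2*k) A
      have hA' : Pred ((1 + Matrix.single (0:Fin (n+1)) j (2*k)) * A) :=
        Pred_mul (Pred_T h0j ⟨k, by ring⟩) hA
      have hlt2 : (A 0 0 + 2*k*A j 0).natAbs < (A 0 0).natAbs := by
        have h5 : |A 0 0 + 2*k*A j 0| < |A 0 0| := lt_trans hk hba
        rw [Int.abs_eq_natAbs, Int.abs_eq_natAbs] at h5
        exact_mod_cast h5
      have hstrict : ((((1:Matrix (Fin (n+1)) (Fin (n+1)) ℤ) + Matrix.single (0:Fin (n+1)) j (2*k)) * A) 0 0).natAbs <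
          (A 0 0).natAbs := by
        rw [hent 0 0, if_pos rfl]
        exact hlt2
      have hsum : (∑ i, ((((1:Matrix (Fin (n+1)) (Fin (n+1)) ℤ) + Matrix.single (0:Fin (n+1)) j (2*k)) * A) i 0).natAbs) <
          ∑ i, ((A i 0).natAbs) := by
        apply Finset.sum_lt_sum
        · intro i _
          rw [hent i 0]
          rcases eq_or_ne i 0 with rfl | h
          · rw [if_pos rfl]
            exact le_of_lt hlt2
          · rw [if_neg h, add_zero]
        · exact ⟨0, Finset.mem_univ 0, hstrict⟩
      have hGA : ((1:Matrix (Fin (n+1)) (Fin (n+1)) ℤ) + Matrix.single (0:Fin (n+1)) j (2*k)) * A ∈ G (n+1) :=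
        ih _ (by omega) hA'
      have hback : A = (1 + Matrix.single (0:Fin (n+1)) j (2*(-k))) *
          ((1 + Matrix.single (0:Fin (n+1)) j (2*k)) * A) := by
        rw [← mul_assoc, addStd_mul_addStd h0j,
          show 2*(-k) + 2*k = (0:ℤ) by ring, Matrix.single_zero, add_zero, one_mul]
      rw [hback]
      exact Submonoid.mul_mem _ (T_mem h0j (-k)) hGA

lemma mem_of_pred : ∀ {n : ℕ} (A : Matrix (Fin n) (Fin n) ℤ), Pred A → A ∈ G n := by
  intro n
  induction n with
  | zero =>
    intro A _
    have : A = 1 := by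
      ext i
      exact i.elim0
    rw [this]
    exact Submonoid.one_mem _
  | succ n ih =>
    intro A hA
    exact main_succ ih (∑ j, (A j 0).natAbs) A le_rfl hA

end ElemInvAux

/-- An `n × n` integer matrix is a product of elementary involutions (equivalently, lies in
the group they generate, since each is its own inverse) if and only if `|det A| = 1` and `A`
is congruent to the identity mod 2. -/
theorem mem_elemInv_closure_iff (n : ℕ) (A : Matrix (Fin n) (Fin n) ℤ) :
    A ∈ Submonoid.closure {M | ∃ (i : Fin n) (j : Option (Fin n)),
        j ≠ some i ∧ M = elemInv n i j} ↔
      |A.det| = 1 ∧ (∀ k l : Fin n, k ≠ l → Even (A k l)) ∧ (∀ k : Fin n, Odd (A k k)) := by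
  constructor
  · intro h
    have hP := ElemInvAux.pred_of_mem (A := A) h
    have hpar := (ElemInvAux.parity_iff A).1 hP.2
    exact ⟨hP.1, hpar.1, hpar.2⟩
  · rintro ⟨h1, h2, h3⟩
    exact ElemInvAux.mem_of_pred A ⟨h1, (ElemInvAux.parity_iff A).2 ⟨h2, h3⟩⟩
end

section
/- Let n ≥ 1 and let A be an n×n integer matrix with |det A| = 1, all off-diagonal entries even, and all diagonal entries odd. Then A can be transformed into the identity matrix by a finite sequence of admissible column operations: multiplying a column by -1, or adding/subtracting twice one column to/from another column. -/
/-- A matrix encoding an admissible column operation: right multiplication by it either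
negates a single column `i`, or replaces column `i` by (column `i`) ± 2·(column `j`) for
some `j ≠ i`. -/
def IsAdmissible {n : ℕ} (B : Matrix (Fin n) (Fin n) ℤ) : Prop :=
  (∃ i : Fin n, B = 1 + Matrix.single i i (-2)) ∨
    (∃ i j : Fin n, i ≠ j ∧
      (B = 1 + Matrix.single j i 2 ∨ B = 1 + Matrix.single j i (-2)))

namespace ReduceAux

open Matrix

variable {n : ℕ}

/-- The target property: `A` can be reduced to `1` by admissible column operations. -/
def Red (A : Matrix (Fin n) (Fin n) ℤ) : Prop :=
  ∃ L : List (Matrix (Fin n) (Fin n) ℤ), (∀ B ∈ L, IsAdmissible B) ∧ A * L.prod = 1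

lemma red_one : Red (1 : Matrix (Fin n) (Fin n) ℤ) := ⟨[], by simp, by simp⟩

lemma red_step {A B : Matrix (Fin n) (Fin n) ℤ} (hB : IsAdmissible B) (h : Red (A * B)) :
    Red A := by
  obtain ⟨L, hL, hprod⟩ := h
  refine ⟨B :: L, ?_, ?_⟩
  · rintro C hC
    rcases List.mem_cons.1 hC with h | h
    · exact h ▸ hB
    · exact hL C h
  · rw [List.prod_cons, ← Matrix.mul_assoc]
    exact hprod

/-- The column-negation matrix. -/
def negMat (i : Fin n) : Matrix (Fin n) (Fin n) ℤ := 1 + Matrix.single i i (-2)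

lemma negMat_admissible (i : Fin n) : IsAdmissible (negMat i) := Or.inl ⟨i, rfl⟩

lemma transvection_admissible (p q : Fin n) (hpq : p ≠ q) (c : ℤ) (hc : c = 2 ∨ c = -2) :
    IsAdmissible (Matrix.transvection p q c) := by
  refine Or.inr ⟨q, p, hpq.symm, ?_⟩
  rcases hc with h | h <;> [left; right] <;> rw [h] <;> rfl

lemma mul_negMat_apply (A : Matrix (Fin n) (Fin n) ℤ) (i : Fin n) (a b : Fin n) :
    (A * negMat i) a b = if b = i then -(A a i) else A a b := by
  rw [negMat, Matrix.mul_add, Matrix.mul_one, Matrix.add_apply]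
  by_cases hb : b = i
  · subst hb
    rw [if_pos rfl, Matrix.mul_single_apply_same]; ring
  · rw [if_neg hb, Matrix.mul_single_apply_of_ne (hbj := hb), add_zero]

lemma negMat_eq_diagonal (i : Fin n) :
    negMat i = Matrix.diagonal (fun k => if k = i then (-1 : ℤ) else 1) := by
  ext a b
  rw [negMat, Matrix.add_apply]
  by_cases hab : a = b
  · subst hab
    by_cases hai : a = i
    · subst hai
      rw [Matrix.single_apply_same, Matrix.one_apply_eq, Matrix.diagonal_apply_eq,
        if_pos rfl]
      norm_num
    · rw [Matrix.single_apply_of_ne (c := (-2 : ℤ)) (h := by tauto), Matrix.one_apply_eq,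
        Matrix.diagonal_apply_eq, if_neg hai, add_zero]
  · rw [Matrix.single_apply_of_ne (c := (-2 : ℤ)) (h := fun h => hab (h.1.symm.trans h.2)),
      Matrix.one_apply_ne hab, Matrix.diagonal_apply_ne _ hab, add_zero]

lemma det_negMat (i : Fin n) : (negMat i).det = -1 := by
  rw [negMat_eq_diagonal, Matrix.det_diagonal]
  rw [Finset.prod_ite_eq' Finset.univ i (fun _ => (-1 : ℤ))]
  simp

lemma abs_det_mul_negMat (A : Matrix (Fin n) (Fin n) ℤ) (i : Fin n) (h : |A.det| = 1) :
    |(A * negMat i).det| = 1 := by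
  rw [Matrix.det_mul, det_negMat, abs_mul, h]
  simp

lemma abs_det_mul_transvection (A : Matrix (Fin n) (Fin n) ℤ) (p q : Fin n) (hpq : p ≠ q)
    (c : ℤ) (h : |A.det| = 1) : |(A * Matrix.transvection p q c).det| = 1 := by
  rw [Matrix.det_mul, Matrix.det_transvection_of_ne p q hpq c, mul_one, h]

/-- Parity hypotheses bundled together. -/
def Par (A : Matrix (Fin n) (Fin n) ℤ) : Prop :=
  (∀ i j : Fin n, i ≠ j → Even (A i j)) ∧ (∀ i : Fin n, Odd (A i i))

lemma par_mul_transvection {A : Matrix (Fin n) (Fin n) ℤ} (hA : Par A) (p q : Fin n)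
    (c : ℤ) (hc : Even c) : Par (A * Matrix.transvection p q c) := by
  constructor
  · intro a b hab
    by_cases hb : b = q
    · rw [hb, Matrix.mul_transvection_apply_same p q a c A]
      exact (hA.1 a q (hb ▸ hab)).add (hc.mul_right _)
    · rw [Matrix.mul_transvection_apply_of_ne p q a b hb c A]
      exact hA.1 a b hab
  · intro a
    by_cases hb : a = q
    · rw [hb, Matrix.mul_transvection_apply_same p q q c A]
      exact (hA.2 q).add_even (hc.mul_right _)
    · rw [Matrix.mul_transvection_apply_of_ne p q a a hb c A]
      exact hA.2 a

lemma par_mul_negMat {A : Matrix (Fin n) (Fin n) ℤ} (hA : Par A) (i : Fin n) :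
    Par (A * negMat i) := by
  constructor
  · intro a b hab
    rw [mul_negMat_apply]
    by_cases hb : b = i
    · subst hb; simp only [if_pos rfl]
      exact (hA.1 a b hab).neg
    · rw [if_neg hb]; exact hA.1 a b hab
  · intro a
    rw [mul_negMat_apply]
    by_cases hb : a = i
    · subst hb; simp only [if_pos rfl]
      exact (hA.2 a).neg
    · rw [if_neg hb]; exact hA.2 a

/-! ### Integer Euclid helper lemmas -/

lemma int_red1 (a b : ℤ) (ha : a ≠ 0) (h : a.natAbs < b.natAbs) :
    ∃ c : ℤ, (c = 2 ∨ c = -2) ∧ (b + c * a).natAbs < b.natAbs := by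
  rcases le_or_gt 0 a with h1 | h1 <;> rcases le_or_gt 0 b with h2 | h2
  · exact ⟨-2, Or.inr rfl, by omega⟩
  · exact ⟨2, Or.inl rfl, by omega⟩
  · exact ⟨2, Or.inl rfl, by omega⟩
  · exact ⟨-2, Or.inr rfl, by omega⟩

lemma int_red2 (a b : ℤ) (hb : b ≠ 0) (h : b.natAbs < a.natAbs) :
    ∃ c : ℤ, (c = 2 ∨ c = -2) ∧ (a + c * b).natAbs < a.natAbs :=
  int_red1 b a hb h

/-! ### Phase 3: clearing off-diagonal entries of a unitriangular matrix, row by row -/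

lemma clear_row (m : Fin n)
    (cont : ∀ A : Matrix (Fin n) (Fin n) ℤ, Par A →
      (∀ i : Fin n, A i i = 1) → (∀ i j : Fin n, i < j → A i j = 0) →
      (∀ i j : Fin n, (m : ℕ) ≤ (i : ℕ) → i ≠ j → A i j = 0) → Red A) :
    ∀ (N : ℕ) (A : Matrix (Fin n) (Fin n) ℤ), Par A →
      (∀ i : Fin n, A i i = 1) → (∀ i j : Fin n, i < j → A i j = 0) →
      (∀ i j : Fin n, (m : ℕ) < (i : ℕ) → i ≠ j → A i j = 0) →
      (∑ l ∈ Finset.univ.erase m, (A m l).natAbs) ≤ N → Red A := by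
  intro N
  induction N with
  | zero =>
    intro A hPar hdiag htri hclr hμ
    apply cont A hPar hdiag htri
    intro i j him hij
    rcases eq_or_lt_of_le him with he | hlt
    · have hi : i = m := Fin.ext he.symm
      subst hi
      have hj : j ∈ Finset.univ.erase i := Finset.mem_erase.2 ⟨fun h => hij h.symm, Finset.mem_univ _⟩
      have := Finset.sum_eq_zero_iff.1 (Nat.le_zero.1 hμ) j hj
      omega
    · exact hclr i j hlt hij
  | succ N ih =>
    intro A hPar hdiag htri hclr hμ
    by_cases hz : ∀ j, j ≠ m → A m j = 0
    · apply cont A hPar hdiag htri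
      intro i j him hij
      rcases eq_or_lt_of_le him with he | hlt
      · have hi : i = m := Fin.ext he.symm
        subst hi
        exact hz j (fun h => hij h.symm)
      · exact hclr i j hlt hij
    · push_neg at hz
      obtain ⟨j, hjm, hAmj⟩ := hz
      -- the operation: add c times column m to column j
      obtain ⟨c, hc, hdec⟩ : ∃ c : ℤ, (c = 2 ∨ c = -2) ∧ (A m j + c).natAbs < (A m j).natAbs := by
        obtain ⟨u, hu⟩ := hPar.1 m j (fun h => hjm h.symm)
        rcases lt_or_ge 0 (A m j) with hpos | hneg
        · exact ⟨-2, Or.inr rfl, by omega⟩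
        · exact ⟨2, Or.inl rfl, by omega⟩
      have hmj : m ≠ j := fun h => hjm h.symm
      set A' := A * Matrix.transvection m j c with hA'
      -- column m of A is the standard basis column
      have hcolm : ∀ a : Fin n, a ≠ m → A a m = 0 := by
        intro a ham
        rcases lt_or_gt_of_ne ham with hlt | hgt
        · exact htri a m hlt
        · exact hclr a m hgt ham
      have happ : ∀ a b : Fin n, A' a b = if b = j then A a b + c * A a m else A a b := by
        intro a b
        by_cases hb : b = j
        · rw [if_pos hb, hb, hA', Matrix.mul_transvection_apply_same m j a c A]
        · rw [if_neg hb, hA', Matrix.mul_transvection_apply_of_ne m j a b hb c A]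
      apply red_step (transvection_admissible m j hmj c hc)
      rw [← hA']
      have hevenc : Even c := by rcases hc with h | h <;> subst h <;> decide
      apply ih A' (par_mul_transvection hPar m j c hevenc)
      · intro i
        rw [happ]
        by_cases hij : i = j
        · rw [if_pos hij, hdiag i, hij, hcolm j hjm]
          ring
        · rw [if_neg hij]; exact hdiag i
      · intro i l hil
        rw [happ]
        by_cases hlj : l = j
        · have him : i ≠ m := by
            intro h
            rw [h, hlj] at hil
            exact hAmj (htri m j hil)
          rw [if_pos hlj, htri i l hil, hcolm i him]
          ring
        · rw [if_neg hlj]; exact htri i l hil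
      · intro i l hmi hil
        rw [happ]
        by_cases hlj : l = j
        · have him : i ≠ m := by
            intro h
            rw [h] at hmi
            exact absurd hmi (lt_irrefl _)
          rw [if_pos hlj, hclr i l hmi hil, hcolm i him]
          ring
        · rw [if_neg hlj]; exact hclr i l hmi hil
      · -- measure decreases
        have hjmem : j ∈ Finset.univ.erase m := Finset.mem_erase.2 ⟨hjm, Finset.mem_univ _⟩
        have hlt : ∑ l ∈ Finset.univ.erase m, (A' m l).natAbs
            < ∑ l ∈ Finset.univ.erase m, (A m l).natAbs := by
          apply Finset.sum_lt_sum
          · intro l _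
            rw [happ]
            by_cases hlj : l = j
            · rw [if_pos hlj, hdiag m, hlj]
              simp only [mul_one]
              omega
            · rw [if_neg hlj]
          · refine ⟨j, hjmem, ?_⟩
            rw [happ, if_pos rfl, hdiag m]
            simpa using hdec
        omega

lemma phase3 : ∀ (s : ℕ) (A : Matrix (Fin n) (Fin n) ℤ), Par A →
    (∀ i : Fin n, A i i = 1) → (∀ i j : Fin n, i < j → A i j = 0) →
    (∀ i j : Fin n, s ≤ (i : ℕ) → i ≠ j → A i j = 0) → Red A := by
  intro s
  induction s with
  | zero =>
    intro A hPar hdiag htri hclr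
    have : A = 1 := by
      ext a b
      by_cases hab : a = b
      · subst hab; rw [Matrix.one_apply_eq]; exact hdiag a
      · rw [Matrix.one_apply_ne hab]; exact hclr a b (Nat.zero_le _) hab
    exact this ▸ red_one
  | succ s ih =>
    intro A hPar hdiag htri hclr
    by_cases hs : s < n
    · refine clear_row ⟨s, hs⟩
        (fun A' h1 h2 h3 h4 => ih A' h1 h2 h3
          (fun i j hi hij => h4 i j (by simp only [Fin.val_mk]; omega) hij))
        _ A hPar hdiag htri
        (fun i j hi hij => hclr i j (by simp only [Fin.val_mk] at hi; omega) hij) (le_refl _)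
    · exact ih A hPar hdiag htri (fun i j hi hij => absurd (i.isLt) (by omega))

/-! ### Phase 2: making the diagonal entries equal to `1` -/

lemma phase2 : ∀ (N : ℕ) (A : Matrix (Fin n) (Fin n) ℤ), Par A →
    (∀ i : Fin n, A i i = 1 ∨ A i i = -1) → (∀ i j : Fin n, i < j → A i j = 0) →
    (Finset.univ.filter (fun i => A i i = -1)).card ≤ N → Red A := by
  intro N
  induction N with
  | zero =>
    intro A hPar hdiag htri hcard
    have hdiag1 : ∀ i : Fin n, A i i = 1 := by
      intro i
      rcases hdiag i with h | h
      · exact h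
      · exfalso
        have : i ∈ Finset.univ.filter (fun i => A i i = -1) := Finset.mem_filter.2 ⟨Finset.mem_univ _, h⟩
        have := Finset.card_pos.2 ⟨i, this⟩
        omega
    exact phase3 n A hPar hdiag1 htri (fun i j hi hij => absurd (i.isLt) (by omega))
  | succ N ih =>
    intro A hPar hdiag htri hcard
    by_cases hz : ∀ i : Fin n, A i i = 1
    · exact phase3 n A hPar hz htri (fun i j hi hij => absurd (i.isLt) (by omega))
    · push_neg at hz
      obtain ⟨i, hi⟩ := hz
      have hneg : A i i = -1 := (hdiag i).resolve_left hi
      set A' := A * negMat i with hA'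
      apply red_step (negMat_admissible i)
      rw [← hA']
      have happ : ∀ a b : Fin n, A' a b = if b = i then -(A a i) else A a b :=
        fun a b => mul_negMat_apply A i a b
      apply ih A' (par_mul_negMat hPar i)
      · intro a
        rw [happ]
        by_cases hai : a = i
        · subst hai; rw [if_pos rfl, hneg]; left; ring
        · rw [if_neg hai]; exact hdiag a
      · intro a b hab
        rw [happ]
        by_cases hbi : b = i
        · subst hbi; rw [if_pos rfl, htri a b hab]; ring
        · rw [if_neg hbi]; exact htri a b hab
      · have hmem : i ∈ Finset.univ.filter (fun k => A k k = -1) :=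
          Finset.mem_filter.2 ⟨Finset.mem_univ _, hneg⟩
        have hsub : (Finset.univ.filter (fun k => A' k k = -1)) ⊆
            (Finset.univ.filter (fun k => A k k = -1)).erase i := by
          intro x hx
          obtain ⟨-, hx⟩ := Finset.mem_filter.1 hx
          rw [happ] at hx
          by_cases hxi : x = i
          · subst hxi; rw [if_pos rfl, hneg] at hx; norm_num at hx
          · rw [if_neg hxi] at hx
            exact Finset.mem_erase.2 ⟨hxi, Finset.mem_filter.2 ⟨Finset.mem_univ _, hx⟩⟩
        have h1 := Finset.card_le_card hsub
        have h2 := Finset.card_erase_of_mem hmem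
        omega

/-! ### Phase 1: making the matrix lower triangular via a Euclidean algorithm -/

lemma euclid (m : Fin n)
    (cont : ∀ A : Matrix (Fin n) (Fin n) ℤ, |A.det| = 1 → Par A →
      (∀ i j : Fin n, (i : ℕ) < (m : ℕ) → i < j → A i j = 0) →
      (∀ j : Fin n, m < j → A m j = 0) → Red A) :
    ∀ (N : ℕ) (A : Matrix (Fin n) (Fin n) ℤ), |A.det| = 1 → Par A →
      (∀ i j : Fin n, (i : ℕ) < (m : ℕ) → i < j → A i j = 0) →
      ((A m m).natAbs + ∑ l ∈ Finset.univ.filter (fun l => m < l), (A m l).natAbs) ≤ N →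
      Red A := by
  intro N
  induction N with
  | zero =>
    intro A hdet hPar htri hμ
    exfalso
    obtain ⟨v, hv⟩ := hPar.2 m
    omega
  | succ N ih =>
    intro A hdet hPar htri hμ
    by_cases hz : ∀ j, m < j → A m j = 0
    · exact cont A hdet hPar htri hz
    · push_neg at hz
      obtain ⟨j, hmj, hb⟩ := hz
      have hjm : j ≠ m := ne_of_gt hmj
      have hmjne : m ≠ j := hjm.symm
      have ha : A m m ≠ 0 := by
        obtain ⟨v, hv⟩ := hPar.2 m
        omega
      rcases lt_trichotomy ((A m m).natAbs) ((A m j).natAbs) with hlt | heq | hgt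
      · -- reduce entry in column j
        obtain ⟨c, hc, hdec⟩ := int_red1 (A m m) (A m j) ha hlt
        set A' := A * Matrix.transvection m j c with hA'
        have happ : ∀ a b : Fin n, A' a b = if b = j then A a b + c * A a m else A a b := by
          intro a b
          by_cases hbj : b = j
          · rw [if_pos hbj, hbj, hA', Matrix.mul_transvection_apply_same m j a c A]
          · rw [if_neg hbj, hA', Matrix.mul_transvection_apply_of_ne m j a b hbj c A]
        apply red_step (transvection_admissible m j hmjne c hc)
        rw [← hA']
        have hevenc : Even c := by rcases hc with h | h <;> subst h <;> decide
        apply ih A' (abs_det_mul_transvection A m j hmjne c hdet)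
          (par_mul_transvection hPar m j c hevenc)
        · intro i l hi hil
          rw [happ]
          by_cases hlj : l = j
          · have h1 : A i l = 0 := htri i l hi hil
            have h2 : A i m = 0 := htri i m hi (Fin.lt_def.mpr hi)
            rw [if_pos hlj, h1, h2]; ring
          · rw [if_neg hlj]; exact htri i l hi hil
        · -- measure
          have hmm : A' m m = A m m := by rw [happ, if_neg hmjne]
          have hjmem : j ∈ Finset.univ.filter (fun l => m < l) :=
            Finset.mem_filter.2 ⟨Finset.mem_univ _, hmj⟩
          have hsum : ∑ l ∈ Finset.univ.filter (fun l => m < l), (A' m l).natAbs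
              < ∑ l ∈ Finset.univ.filter (fun l => m < l), (A m l).natAbs := by
            apply Finset.sum_lt_sum
            · intro l _
              rw [happ]
              by_cases hlj : l = j
              · rw [if_pos hlj, hlj]; omega
              · rw [if_neg hlj]
            · exact ⟨j, hjmem, by rw [happ, if_pos rfl]; exact hdec⟩
          omega
      · -- impossible by parity
        exfalso
        obtain ⟨u, hu⟩ := hPar.1 m j hmjne
        obtain ⟨v, hv⟩ := hPar.2 m
        omega
      · -- reduce the diagonal entry
        obtain ⟨c, hc, hdec⟩ := int_red2 (A m m) (A m j) hb hgt
        set A' := A * Matrix.transvection j m c with hA'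
        have happ : ∀ a b : Fin n, A' a b = if b = m then A a b + c * A a j else A a b := by
          intro a b
          by_cases hbm : b = m
          · rw [if_pos hbm, hbm, hA', Matrix.mul_transvection_apply_same j m a c A]
          · rw [if_neg hbm, hA', Matrix.mul_transvection_apply_of_ne j m a b hbm c A]
        apply red_step (transvection_admissible j m hjm c hc)
        rw [← hA']
        have hevenc : Even c := by rcases hc with h | h <;> subst h <;> decide
        apply ih A' (abs_det_mul_transvection A j m hjm c hdet)
          (par_mul_transvection hPar j m c hevenc)
        · intro i l hi hil
          rw [happ]
          by_cases hlm : l = m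
          · have h1 : A i l = 0 := htri i l hi hil
            have hlj' : l < j := by rw [hlm]; exact hmj
            have h2 : A i j = 0 := htri i j hi (lt_trans hil hlj')
            rw [if_pos hlm, h1, h2]; ring
          · rw [if_neg hlm]; exact htri i l hi hil
        · -- measure
          have hmm : A' m m = A m m + c * A m j := by rw [happ, if_pos rfl]
          have hsum : ∑ l ∈ Finset.univ.filter (fun l => m < l), (A' m l).natAbs
              = ∑ l ∈ Finset.univ.filter (fun l => m < l), (A m l).natAbs := by
            apply Finset.sum_congr rfl
            intro l hl
            have hml : m < l := (Finset.mem_filter.1 hl).2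
            rw [happ, if_neg (ne_of_gt hml)]
          rw [hmm, hsum]
          omega

lemma phase1 : ∀ (t k : ℕ), n ≤ k + t → ∀ A : Matrix (Fin n) (Fin n) ℤ, |A.det| = 1 → Par A →
    (∀ i j : Fin n, (i : ℕ) < k → i < j → A i j = 0) → Red A := by
  intro t
  induction t with
  | zero =>
    intro k hk A hdet hPar htri
    have htri' : ∀ i j : Fin n, i < j → A i j = 0 :=
      fun i j hij => htri i j (by omega) hij
    have hdet_prod : A.det = ∏ i, A i i := by
      apply Matrix.det_of_lowerTriangular
      intro i j hij
      exact htri' i j hij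
    have hdiag : ∀ i : Fin n, A i i = 1 ∨ A i i = -1 := by
      intro i
      have hdvd : A i i ∣ A.det := hdet_prod ▸ Finset.dvd_prod_of_mem _ (Finset.mem_univ i)
      have hunit : IsUnit A.det :=
        Int.isUnit_iff.2 ((abs_eq (by norm_num : (0:ℤ) ≤ 1)).1 hdet)
      exact Int.isUnit_iff.1 (isUnit_of_dvd_unit hdvd hunit)
    exact phase2 _ A hPar hdiag htri' (le_refl _)
  | succ t ih =>
    intro k hk A hdet hPar htri
    by_cases hkn : k < n
    · refine euclid ⟨k, hkn⟩ ?_ _ A hdet hPar htri (le_refl _)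
      intro A' h1 h2 h3 h4
      apply ih (k + 1) (by omega) A' h1 h2
      intro i j hi hij
      rcases Nat.lt_or_ge (i : ℕ) k with hik | hik
      · exact h3 i j hik hij
      · have : i = (⟨k, hkn⟩ : Fin n) := Fin.ext (by simp only [Fin.val_mk]; omega)
        subst this
        exact h4 j hij
    · exact ih k (by omega) A hdet hPar htri

end ReduceAux


/-- Any `n × n` integer matrix with `|det A| = 1`, even off-diagonal entries and odd
diagonal entries can be transformed into the identity by a finite sequence of admissible
column operations. -/
theorem reduce_to_identity (n : ℕ) (hn : 1 ≤ n) (A : Matrix (Fin n) (Fin n) ℤ)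
    (hdet : |A.det| = 1)
    (hoff : ∀ i j : Fin n, i ≠ j → Even (A i j)) (hdiag : ∀ i : Fin n, Odd (A i i)) :
    ∃ L : List (Matrix (Fin n) (Fin n) ℤ),
      (∀ B ∈ L, IsAdmissible B) ∧ A * L.prod = 1 := by
  exact ReduceAux.phase1 n 0 (by omega) A hdet ⟨hoff, hdiag⟩
    (fun i j hi _ => absurd hi (Nat.not_lt_zero _))
end

section
/- Let M be the n×n integer matrix with first row all -1's and subdiagonal entries 1, set N = n+1, and let 1 ≤ i < N be coprime to N. Define B_i = I + M + ... + M^{i-1}. Then B_i is invertible over the integers; in particular |det B_i| = 1. -/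
open Finset

/-- The companion-type matrix `M`: first row all `-1`'s, subdiagonal entries `1`, all other
entries `0`. -/
def compM (n : ℕ) : Matrix (Fin n) (Fin n) ℤ :=
  fun k l => if (k : ℕ) = 0 then -1 else if (k : ℕ) = (l : ℕ) + 1 then 1 else 0

/-- The partial geometric sum `B_i = I + M + ⋯ + M^(i-1)`. -/
def Bmat (n i : ℕ) : Matrix (Fin n) (Fin n) ℤ := ∑ j ∈ range i, compM n ^ j

lemma fin_sum_delta (n a : ℕ) (c : ℤ) :
    ∑ m : Fin n, (if (m : ℕ) = a then c else 0) = if a < n then c else 0 := by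
  split_ifs with h
  · rw [Finset.sum_eq_single (⟨a, h⟩ : Fin n)]
    · simp
    · intro m _ hm
      have : (m : ℕ) ≠ a := fun hc => hm (Fin.ext hc)
      simp [this]
    · simp
  · apply Finset.sum_eq_zero
    intro m _
    have := m.isLt
    have : (m : ℕ) ≠ a := by omega
    simp [this]

lemma powM (n : ℕ) : ∀ j, 1 ≤ j → j ≤ n → ∀ k l : Fin n,
    (compM n ^ j) k l =
      if (k : ℕ) = j - 1 then -1
      else if (l : ℕ) + j = (k : ℕ) ∨ (l : ℕ) + j = (k : ℕ) + (n + 1) then 1 else 0 := by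
  intro j
  induction j with
  | zero => omega
  | succ j ih =>
    intro _ hj2 k l
    have hk := k.isLt
    have hl := l.isLt
    rcases Nat.eq_zero_or_pos j with hj0 | hj1
    · subst hj0
      rw [pow_one]
      show (if (k : ℕ) = 0 then -1 else if (k : ℕ) = (l : ℕ) + 1 then 1 else 0) = _
      split_ifs <;> omega
    · have H := ih hj1 (by omega)
      rw [pow_succ', Matrix.mul_apply]
      by_cases hk0 : (k : ℕ) = 0
      · have step : ∀ m : Fin n, compM n k m * (compM n ^ j) m l
            = -(if (m : ℕ) = j - 1 then (-1:ℤ)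
              else if (l : ℕ) + j = (m : ℕ) ∨ (l : ℕ) + j = (m : ℕ) + (n + 1) then 1 else 0) := by
          intro m
          rw [H m l]
          simp only [compM, hk0, if_true, if_pos rfl]
          split_ifs <;> norm_num
        rw [Finset.sum_congr rfl (fun m _ => step m), Finset.sum_neg_distrib]
        by_cases hc : (l : ℕ) + j = n
        · have ptw : ∀ m : Fin n,
              (if (m : ℕ) = j - 1 then (-1:ℤ)
                else if (l : ℕ) + j = (m : ℕ) ∨ (l : ℕ) + j = (m : ℕ) + (n + 1) then 1 else 0)
              = (if (m : ℕ) = j - 1 then (-1:ℤ) else 0) := by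
            intro m
            have := m.isLt
            split_ifs <;> omega
          rw [Finset.sum_congr rfl (fun m _ => ptw m), fin_sum_delta]
          split_ifs <;> omega
        · set m0 : ℕ := if (l : ℕ) + j < n then (l : ℕ) + j else (l : ℕ) + j - (n+1) with hm0
          have ptw : ∀ m : Fin n,
              (if (m : ℕ) = j - 1 then (-1:ℤ)
                else if (l : ℕ) + j = (m : ℕ) ∨ (l : ℕ) + j = (m : ℕ) + (n + 1) then 1 else 0)
              = (if (m : ℕ) = j - 1 then (-1:ℤ) else 0) + (if (m : ℕ) = m0 then 1 else 0) := by
            intro m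
            have := m.isLt
            rw [hm0]
            split_ifs <;> omega
          rw [Finset.sum_congr rfl (fun m _ => ptw m), Finset.sum_add_distrib,
            fin_sum_delta, fin_sum_delta]
          have hm0lt : m0 < n := by rw [hm0]; split_ifs <;> omega
          have hj1n : j - 1 < n := by omega
          rw [if_pos hj1n, if_pos hm0lt]
          split_ifs <;> omega
      · have hk1 : (k : ℕ) - 1 < n := by omega
        have hval : ((⟨(k : ℕ) - 1, hk1⟩ : Fin n) : ℕ) = (k : ℕ) - 1 := rfl
        rw [Finset.sum_eq_single (⟨(k : ℕ) - 1, hk1⟩ : Fin n)]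
        · have hcm : compM n k ⟨(k : ℕ) - 1, hk1⟩ = 1 := by
            simp only [compM, hk0, if_false, hval]
            rw [if_pos (by omega)]
          rw [hcm, one_mul, H]
          simp only [hval]
          split_ifs <;> omega
        · intro m _ hm
          have hne : ¬ ((k : ℕ) = (m : ℕ) + 1) := by
            intro hc
            exact hm (Fin.ext (show (m : ℕ) = ((⟨(k : ℕ) - 1, hk1⟩ : Fin n) : ℕ) by rw [hval]; omega))
          simp [compM, hk0, hne]
        · simp

lemma sumM (n : ℕ) (hn : 1 ≤ n) : ∑ j ∈ range (n + 1), compM n ^ j = 0 := by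
  ext k l
  have hk := k.isLt
  have hl := l.isLt
  rw [Matrix.sum_apply, Finset.sum_range_succ']
  have hzero : (compM n ^ 0) k l = if (k : ℕ) = (l : ℕ) then 1 else 0 := by
    rw [pow_zero, Matrix.one_apply]
    split_ifs with h h2 h3
    · rfl
    · exact absurd (Fin.val_eq_of_eq h) h2
    · exact absurd (Fin.ext h3) h
    · rfl
  have step : ∀ i ∈ range n, (compM n ^ (i + 1)) k l =
      if (k : ℕ) = i then -1
      else if (l : ℕ) + (i + 1) = (k : ℕ) ∨ (l : ℕ) + (i + 1) = (k : ℕ) + (n + 1) then 1 else 0 := by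
    intro i hi
    rw [Finset.mem_range] at hi
    rw [powM n (i + 1) (by omega) (by omega) k l]
    simp
  rw [Finset.sum_congr rfl step, hzero]
  by_cases hkl : (k : ℕ) = (l : ℕ)
  · have ptw : ∀ i ∈ range n,
        (if (k : ℕ) = i then (-1:ℤ)
          else if (l : ℕ) + (i + 1) = (k : ℕ) ∨ (l : ℕ) + (i + 1) = (k : ℕ) + (n + 1) then 1 else 0)
        = (if i = (k : ℕ) then (-1:ℤ) else 0) := by
      intro i hi
      rw [Finset.mem_range] at hi
      split_ifs <;> omega
    rw [Finset.sum_congr rfl ptw, Finset.sum_ite_eq' (range n) _ (fun _ => (-1:ℤ))]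
    rw [if_pos (Finset.mem_range.mpr hk), if_pos hkl]
    norm_num
  · set i0 : ℕ := if (l : ℕ) < (k : ℕ) then (k : ℕ) - (l : ℕ) - 1 else (k : ℕ) + n - (l : ℕ)
      with hi0
    have ptw : ∀ i ∈ range n,
        (if (k : ℕ) = i then (-1:ℤ)
          else if (l : ℕ) + (i + 1) = (k : ℕ) ∨ (l : ℕ) + (i + 1) = (k : ℕ) + (n + 1) then 1 else 0)
        = (if i = (k : ℕ) then (-1:ℤ) else 0) + (if i = i0 then 1 else 0) := by
      intro i hi
      rw [Finset.mem_range] at hi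
      rw [hi0]
      split_ifs <;> omega
    have hi0lt : i0 < n := by rw [hi0]; split_ifs <;> omega
    rw [Finset.sum_congr rfl ptw, Finset.sum_add_distrib,
      Finset.sum_ite_eq' (range n) _ (fun _ => (-1:ℤ)),
      Finset.sum_ite_eq' (range n) _ (fun _ => (1:ℤ)),
      if_pos (Finset.mem_range.mpr hk), if_pos (Finset.mem_range.mpr hi0lt), if_neg hkl]
    norm_num

lemma Bmat_add (n a b : ℕ) : Bmat n (a + b) = Bmat n a + compM n ^ a * Bmat n b := by
  unfold Bmat
  rw [Finset.sum_range_add, Finset.mul_sum]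
  congr 1
  exact Finset.sum_congr rfl fun j _ => pow_add _ _ _

lemma Bmat_period (n : ℕ) (hn : 1 ≤ n) (a : ℕ) : Bmat n (a + (n + 1)) = Bmat n a := by
  rw [Bmat_add]
  have : Bmat n (n + 1) = 0 := sumM n hn
  rw [this, mul_zero, add_zero]

lemma Bmat_one (n : ℕ) : Bmat n 1 = 1 := by
  simp [Bmat]

lemma Bmat_rep (n : ℕ) (hn : 1 ≤ n) (q : ℕ) : Bmat n (q * (n + 1) + 1) = 1 := by
  induction q with
  | zero => simpa using Bmat_one n
  | succ q ih =>
    have : (q + 1) * (n + 1) + 1 = (q * (n + 1) + 1) + (n + 1) := by ring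
    rw [this, Bmat_period n hn, ih]

lemma Bmat_mul (n i : ℕ) (l : ℕ) :
    Bmat n i * (∑ j ∈ range l, compM n ^ (i * j)) = Bmat n (i * l) := by
  induction l with
  | zero => simp [Bmat]
  | succ l ih =>
    rw [Finset.sum_range_succ, mul_add, ih, Nat.mul_succ, Bmat_add]
    congr 1
    unfold Bmat
    rw [Finset.sum_mul, Finset.mul_sum]
    exact Finset.sum_congr rfl fun j _ => pow_mul_comm _ _ _

/-- If `1 ≤ i < N = n + 1` and `i` is coprime to `N`, then `B_i` is invertible over the
integers; in particular `|det B_i| = 1`. -/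
theorem Bmat_isUnit (n : ℕ) (hn : 1 ≤ n) (i : ℕ) (h1 : 1 ≤ i) (h2 : i < n + 1)
    (hcop : Nat.Coprime i (n + 1)) :
    IsUnit (Bmat n i) ∧ |(Bmat n i).det| = 1 := by
  obtain ⟨m, -, hm⟩ := Nat.exists_mul_mod_eq_one_of_coprime hcop (by omega)
  have hrep : i * m = (i * m / (n + 1)) * (n + 1) + 1 := by
    conv_lhs => rw [← Nat.div_add_mod' (i * m) (n + 1)]
    rw [hm]
  have key : Bmat n i * (∑ j ∈ range m, compM n ^ (i * j)) = 1 := by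
    rw [Bmat_mul, hrep, Bmat_rep n hn]
  have hinv : Invertible (Bmat n i) := invertibleOfRightInverse _ _ key
  have hu : IsUnit (Bmat n i) := isUnit_of_invertible _
  refine ⟨hu, ?_⟩
  have hdet : IsUnit (Bmat n i).det := (Matrix.isUnit_iff_isUnit_det _).mp hu
  rcases Int.isUnit_iff.mp hdet with h | h <;> rw [h] <;> norm_num
end

section
/- Four grasshoppers starting at the vertices of a unit square, where each move replaces the position p of one grasshopper by 2q - p for the position q of another grasshopper, always remain at points of the integer lattice ℤ². Consequently, they can never occupy the vertices of a square strictly smaller than the unit square. -/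
noncomputable section

/-- The vertices `(0,0), (s,0), (s,s), (0,s)` of the axis-parallel square of side `s`. -/
def squareVerts (s : ℝ) : Fin 4 → EuclideanSpace ℝ (Fin 2) :=
  ![(WithLp.equiv 2 (Fin 2 → ℝ)).symm ![0, 0],
    (WithLp.equiv 2 (Fin 2 → ℝ)).symm ![s, 0],
    (WithLp.equiv 2 (Fin 2 → ℝ)).symm ![s, s],
    (WithLp.equiv 2 (Fin 2 → ℝ)).symm ![0, s]]

/-- One legal move: grasshopper `a` jumps over grasshopper `b`, its position `p` being
replaced by the reflection `2q - p` through `b`'s position `q`. -/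
def Jump (x y : Fin 4 → EuclideanSpace ℝ (Fin 2)) : Prop :=
  ∃ a b : Fin 4, a ≠ b ∧ y = Function.update x a (2 • x b - x a)

lemma jump_lat {x y : Fin 4 → EuclideanSpace ℝ (Fin 2)} (h : Jump x y)
    (hx : ∀ k i, ∃ m : ℤ, x k i = (m : ℝ)) :
    ∀ k i, ∃ m : ℤ, y k i = (m : ℝ) := by
  obtain ⟨a, b, hab, rfl⟩ := h
  intro k i
  by_cases hk : k = a
  · subst hk
    obtain ⟨m, hm⟩ := hx b i
    obtain ⟨n, hn⟩ := hx k i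
    refine ⟨2 * m - n, ?_⟩
    have : (2 • x b - x k) i = 2 * x b i - x k i := by
      simp [PiLp.sub_apply, PiLp.smul_apply]
    rw [Function.update_self, this, hm, hn]
    push_cast; ring
  · rw [Function.update_of_ne hk]
    exact hx k i

/-- Four grasshoppers starting at the vertices `(0,0), (1,0), (0,1), (1,1)` of the unit
square always remain on the integer lattice `ℤ²`; consequently, they can never occupy the
vertices of a square of side length strictly less than `1`. -/
theorem grasshoppers_unit_square
    (start : Fin 4 → EuclideanSpace ℝ (Fin 2))
    (hstart : start = ![(WithLp.equiv 2 (Fin 2 → ℝ)).symm ![0, 0],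
      (WithLp.equiv 2 (Fin 2 → ℝ)).symm ![1, 0],
      (WithLp.equiv 2 (Fin 2 → ℝ)).symm ![0, 1],
      (WithLp.equiv 2 (Fin 2 → ℝ)).symm ![1, 1]])
    (pos : Fin 4 → EuclideanSpace ℝ (Fin 2))
    (hreach : Relation.ReflTransGen Jump start pos) :
    (∀ k : Fin 4, ∀ i : Fin 2, ∃ m : ℤ, pos k i = (m : ℝ)) ∧
      ¬ ∃ (s : ℝ) (f : EuclideanSpace ℝ (Fin 2) ≃ᵢ EuclideanSpace ℝ (Fin 2))
          (σ : Equiv.Perm (Fin 4)),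
          0 < s ∧ s < 1 ∧ ∀ k : Fin 4, pos (σ k) = f (squareVerts s k) := by
  have hint : ∀ k : Fin 4, ∀ i : Fin 2, ∃ m : ℤ, pos k i = (m : ℝ) := by
    induction hreach with
    | refl =>
      intro k i
      subst hstart
      fin_cases k <;> fin_cases i
      exacts [⟨0, by simp [WithLp.equiv_symm_apply, PiLp.toLp_apply]⟩,
        ⟨0, by simp [WithLp.equiv_symm_apply, PiLp.toLp_apply]⟩,
        ⟨1, by simp [WithLp.equiv_symm_apply, PiLp.toLp_apply]⟩,
        ⟨0, by simp [WithLp.equiv_symm_apply, PiLp.toLp_apply]⟩,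
        ⟨0, by simp [WithLp.equiv_symm_apply, PiLp.toLp_apply]⟩,
        ⟨1, by simp [WithLp.equiv_symm_apply, PiLp.toLp_apply]⟩,
        ⟨1, by simp [WithLp.equiv_symm_apply, PiLp.toLp_apply]⟩,
        ⟨1, by simp [WithLp.equiv_symm_apply, PiLp.toLp_apply]⟩]
    | tail _ hjump ih => exact jump_lat hjump ih
  refine ⟨hint, ?_⟩
  rintro ⟨s, f, σ, hs, hs1, hk⟩
  have hdist : dist (pos (σ 0)) (pos (σ 1)) = s := by
    rw [hk 0, hk 1, f.dist_eq, EuclideanSpace.dist_eq, Fin.sum_univ_two]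
    simp only [squareVerts, Matrix.cons_val_zero, Matrix.cons_val_one, Matrix.head_cons,
      WithLp.equiv_symm_apply, PiLp.toLp_apply, Real.dist_eq]
    rw [show |(0:ℝ) - s| = |s| by rw [zero_sub, abs_neg]]
    simp [sq_abs, Real.sqrt_sq hs.le]
  obtain ⟨m0, hm0⟩ := hint (σ 0) 0
  obtain ⟨m1, hm1⟩ := hint (σ 0) 1
  obtain ⟨n0, hn0⟩ := hint (σ 1) 0
  obtain ⟨n1, hn1⟩ := hint (σ 1) 1
  have hsq : s ^ 2 = (((m0 - n0) ^ 2 + (m1 - n1) ^ 2 : ℤ) : ℝ) := by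
    rw [← hdist, EuclideanSpace.dist_eq, Real.sq_sqrt (by positivity), Fin.sum_univ_two,
      Real.dist_eq, Real.dist_eq, sq_abs, sq_abs, hm0, hm1, hn0, hn1]
    push_cast; ring
  have h2 : (((m0 - n0) ^ 2 + (m1 - n1) ^ 2 : ℤ) : ℝ) < 1 := by nlinarith
  have h2' : ((m0 - n0) ^ 2 + (m1 - n1) ^ 2 : ℤ) < 1 := by exact_mod_cast h2
  have h3 : ((m0 - n0) ^ 2 + (m1 - n1) ^ 2 : ℤ) = 0 := by nlinarith [sq_nonneg (m0 - n0), sq_nonneg (m1 - n1)]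
  rw [h3] at hsq
  push_cast at hsq
  nlinarith
end
end
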